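/- For every m ≥ 4, the code RC_m is the disjoint union of three groups: the codewords beginning with 0011 from the left, the codewords beginning with 011 from the left, and the codewords beginning with 1 from the left; every codeword belongs to exactly one of these groups. -/

import Mathlib

/-- The RR constraint: no index `i` with `i + 2 ≤ m - 1` such that `c i = 0` and `c (i+2) = 0`
(bit `false` plays the role of `0`, bit `true` the role of `1`). -/
def RRok (m : ℕ) (c : Fin m → Bool) : Prop :=
  ∀ i j : Fin m, (j : ℕ) = (i : ℕ) + 2 → ¬(c i = false ∧ c j = false)

instance (m : ℕ) : DecidablePred (RRok m) := fun c => by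
  unfold RRok; infer_instance

/-- The LOCO code `RC_m`: all binary words of length `m` satisfying the RR constraint. -/
def RC (m : ℕ) : Finset (Fin m → Bool) := Finset.univ.filter (RRok m)

/-- `N m = |RC_m|`. -/
def N (m : ℕ) : ℕ := (RC m).card

theorem mem_RC {m : ℕ} {c : Fin m → Bool} : c ∈ RC m ↔ RRok m c := by
  simp [RC]

theorem RRok.eq_true_of_eq_false {m : ℕ} {c : Fin m → Bool} (hc : RRok m c) {i j : Fin m}
    (hij : (j : ℕ) = i + 2) (hj : c j = false) : c i = true := by
  simpa [hj] using hc i j hij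

/-- For `m ≥ 4`, `RC_m` is the disjoint union of three groups: codewords beginning (from the
left) with `0011`, codewords beginning with `011`, and codewords beginning with `1`; every
codeword belongs to exactly one group. -/
theorem stmt4 (m : ℕ) (hm : 4 ≤ m) :
    ∀ c ∈ RC m,
      let P1 := c ⟨m - 1, by omega⟩ = false ∧ c ⟨m - 2, by omega⟩ = false ∧
                c ⟨m - 3, by omega⟩ = true ∧ c ⟨m - 4, by omega⟩ = true
      let P2 := c ⟨m - 1, by omega⟩ = false ∧ c ⟨m - 2, by omega⟩ = true ∧
                c ⟨m - 3, by omega⟩ = true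
      let P3 := c ⟨m - 1, by omega⟩ = true
      (P1 ∧ ¬P2 ∧ ¬P3) ∨ (¬P1 ∧ P2 ∧ ¬P3) ∨ (¬P1 ∧ ¬P2 ∧ P3) := by
  intro c hc P1 P2 P3
  have hok : RRok m c := mem_RC.mp hc
  have bit3_of_bit1 : c ⟨m - 1, by omega⟩ = false → c ⟨m - 3, by omega⟩ = true :=
    hok.eq_true_of_eq_false (by simp only; omega)
  have bit4_of_bit2 : c ⟨m - 2, by omega⟩ = false → c ⟨m - 4, by omega⟩ = true :=
    hok.eq_true_of_eq_false (by simp only; omega)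
  cases h1 : c ⟨m - 1, by omega⟩ <;> cases h2 : c ⟨m - 2, by omega⟩ <;>
    simp_all [P1, P2, P3]
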